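/- arXiv:2503.12302 — 5 statements merged into one kernel-verified Lean document; each statement's English description precedes it below -/
import Mathlib

section
/- For a finite group G and a subgroup H of G, if m_G(H) = m_G(C_G(H)), then C_G(C_G(H)) = H, where m_G(K) = |K| · |C_G(K)|. -/
open Pointwise

/-- Chermak–Delgado measure of a subgroup. -/
noncomputable def mCD (G : Type*) [Group G] (H : Subgroup G) : ℕ :=
  Nat.card H * Nat.card (Subgroup.centralizer (H : Set G))

/-- Maximal Chermak–Delgado measure. -/
noncomputable def mStar (G : Type*) [Group G] : ℕ :=
  sSup (Set.range (mCD G))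

/-- Chermak–Delgado lattice (as a set of subgroups). -/
def CD (G : Type*) [Group G] : Set (Subgroup G) :=
  {H | mCD G H = mStar G}

/-- A group has dense CD-subgroups if for all subgroups H < K with H not
maximal in K, there exists X in CD(G) with H < X < K. -/
def DenseCD (G : Type*) [Group G] : Prop :=
  ∀ H K : Subgroup G, H < K → (∃ L : Subgroup G, H < L ∧ L < K) →
    ∃ X ∈ CD G, H < X ∧ X < K

theorem stmt1 (G : Type*) [Group G] [Finite G] (H : Subgroup G)
    (h : mCD G H = mCD G (Subgroup.centralizer (H : Set G))) :
    Subgroup.centralizer ((Subgroup.centralizer (H : Set G) : Subgroup G) : Set G) = H := by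
  have hle : H ≤ Subgroup.centralizer ((Subgroup.centralizer (H : Set G) : Subgroup G) : Set G) :=
    fun x hx => Subgroup.mem_centralizer_iff.mpr fun g hg => (hg x hx).symm
  have hc : 0 < Nat.card (Subgroup.centralizer (H : Set G)) := Nat.card_pos
  have hcard : Nat.card H =
      Nat.card (Subgroup.centralizer ((Subgroup.centralizer (H : Set G) : Subgroup G) : Set G)) := by
    unfold mCD at h
    rw [mul_comm (Nat.card (Subgroup.centralizer (H : Set G)))] at h
    exact Nat.eq_of_mul_eq_mul_right hc h
  apply SetLike.coe_injective
  refine (Set.eq_of_subset_of_ncard_le hle ?_ (Set.toFinite _)).symm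
  rw [← Nat.card_coe_set_eq, ← Nat.card_coe_set_eq]
  simp only [SetLike.coe_sort_coe]
  omega
end

section
/- For a finite group G, if H and K both attain the maximal Chermak–Delgado measure m*(G), then the product HK is a subgroup of G (i.e., HK = KH) and HK also attains m*(G). -/
open Pointwise

/-!
Write `C(X)` for the centralizer of `X`. The product formula `|HK| |H ∩ K| = |H| |K|`, applied to
`H, K` and to `C(H), C(K)` (using `C(H ⊔ K) = C(H) ∩ C(K)`), gives
`m(H) m(K) = |HK| |H ∩ K| |C(H) C(K)| |C(H ⊔ K)|`. Since `C(H) C(K) ⊆ C(H ∩ K)`, this is at most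
`m(H ⊔ K) m(H ∩ K) |HK| / |H ⊔ K|`. If `m(H) = m(K) = m*`, maximality of `m*` forces
`|H ⊔ K| ≤ |HK|`, so the set `HK` is the subgroup `H ⊔ K`, and then `m(H ⊔ K) = m*`.
-/

namespace Subgroup

variable {G : Type*} [Group G]

theorem card_mul_mul_card_inf (H K : Subgroup G) :
    Nat.card ((H : Set G) * (K : Set G)) * Nat.card (H ⊓ K : Subgroup G) =
      Nat.card H * Nat.card K := by
  -- `|HK| = |K| · |HK/K|`, and `HK/K` is the `H`-orbit of the trivial coset, with stabilizer `H ∩ K`.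
  have hsmul (h : H) : h • (QuotientGroup.mk 1 : G ⧸ K) = QuotientGroup.mk (h : G) := by
    change (h : G) • (QuotientGroup.mk 1 : G ⧸ K) = _
    rw [MulAction.Quotient.smul_mk, smul_eq_mul, mul_one]
  have horbit : MulAction.orbit H (QuotientGroup.mk 1 : G ⧸ K) =
      QuotientGroup.mk '' (H : Set G) := by
    ext q
    simp [MulAction.mem_orbit_iff, hsmul]
  have hstab : MulAction.stabilizer H (QuotientGroup.mk 1 : G ⧸ K) = K.subgroupOf H := by
    ext h
    simp [MulAction.mem_stabilizer_iff, mem_subgroupOf, hsmul, QuotientGroup.eq]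
  have hinf : Nat.card (H ⊓ K : Subgroup G) = Nat.card (K.subgroupOf H) := by
    rw [← inf_subgroupOf_left]
    exact Nat.card_congr (subgroupOfEquivOfLe inf_le_left).toEquiv.symm
  rw [card_mul_eq_card_subgroup_mul_card_quotient, ← horbit, Nat.card_coe_set_eq,
    ← MulAction.index_stabilizer, hstab, hinf, mul_assoc, index_mul_card, mul_comm]

theorem centralizer_sup (H K : Subgroup G) :
    centralizer ((H ⊔ K : Subgroup G) : Set G) = centralizer H ⊓ centralizer K := by
  rw [sup_eq_closure, centralizer_closure]
  ext
  simp [mem_centralizer_iff, or_imp, forall_and]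

theorem card_mul_le_card_of_le [Finite G] {H K L : Subgroup G} (hH : H ≤ L) (hK : K ≤ L) :
    Nat.card ((H : Set G) * (K : Set G)) ≤ Nat.card L :=
  Nat.card_mono (Set.toFinite _) (mul_subset hH hK)

theorem coe_mul_comm_of_coe_mul_eq {H K L : Subgroup G} (h : (H : Set G) * K = L) :
    (H : Set G) * K = K * H := by
  rw [h, ← inv_coe_set (H := L), ← h, mul_inv_rev, inv_coe_set, inv_coe_set]

end Subgroup

open Subgroup

section ChermakDelgado

variable {G : Type*} [Group G]

theorem mCD_mul_mCD (H K : Subgroup G) :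
    mCD G H * mCD G K =
      Nat.card ((H : Set G) * (K : Set G)) * Nat.card (H ⊓ K : Subgroup G) *
        (Nat.card ((centralizer (H : Set G) : Set G) * (centralizer (K : Set G) : Set G)) *
          Nat.card (centralizer ((H ⊔ K : Subgroup G) : Set G))) := by
  rw [card_mul_mul_card_inf, centralizer_sup, card_mul_mul_card_inf, mCD, mCD]
  ring

variable [Finite G]

theorem mCD_mul_mCD_mul_card_sup_le (H K : Subgroup G) :
    mCD G H * mCD G K * Nat.card (H ⊔ K : Subgroup G) ≤
      mCD G (H ⊔ K) * mCD G (H ⊓ K) * Nat.card ((H : Set G) * (K : Set G)) := by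
  have hcent : Nat.card ((centralizer (H : Set G) : Set G) * (centralizer (K : Set G) : Set G)) ≤
      Nat.card (centralizer ((H ⊓ K : Subgroup G) : Set G)) :=
    card_mul_le_card_of_le (centralizer_le inf_le_left) (centralizer_le inf_le_right)
  rw [mCD_mul_mCD, mCD, mCD]
  calc _ ≤ Nat.card ((H : Set G) * (K : Set G)) * Nat.card (H ⊓ K : Subgroup G) *
        (Nat.card (centralizer ((H ⊓ K : Subgroup G) : Set G)) *
          Nat.card (centralizer ((H ⊔ K : Subgroup G) : Set G))) *
        Nat.card (H ⊔ K : Subgroup G) := by gcongr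
    _ = _ := by ring

theorem mCD_le_mStar (H : Subgroup G) : mCD G H ≤ mStar G :=
  le_csSup (Set.finite_range _).bddAbove (Set.mem_range_self H)

theorem mStar_pos : 0 < mStar G :=
  (Nat.mul_pos Nat.card_pos Nat.card_pos).trans_le (mCD_le_mStar (⊥ : Subgroup G))

theorem mCD_eq_mStar_of_mStar_mul_mStar_le {H K : Subgroup G}
    (h : mStar G * mStar G ≤ mCD G H * mCD G K) : mCD G H = mStar G := by
  refine (mCD_le_mStar H).antisymm (Nat.le_of_mul_le_mul_right ?_ (mStar_pos (G := G)))
  exact h.trans (Nat.mul_le_mul_left _ (mCD_le_mStar K))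

end ChermakDelgado

theorem stmt3 (G : Type*) [Group G] [Finite G] (H K : Subgroup G)
    (hH : mCD G H = mStar G) (hK : mCD G K = mStar G) :
    (H : Set G) * (K : Set G) = (K : Set G) * (H : Set G) ∧
    ∃ L : Subgroup G, (L : Set G) = (H : Set G) * (K : Set G) ∧ mCD G L = mStar G := by
  have key := mCD_mul_mCD_mul_card_sup_le H K
  rw [hH, hK] at key
  have hcard : Nat.card (H ⊔ K : Subgroup G) ≤ Nat.card ((H : Set G) * (K : Set G)) := by
    refine Nat.le_of_mul_le_mul_left (key.trans ?_) (Nat.mul_pos mStar_pos mStar_pos)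
    gcongr <;> exact mCD_le_mStar _
  have hHK : (H : Set G) * K = (H ⊔ K : Subgroup G) :=
    Set.eq_of_subset_of_ncard_le (mul_subset (le_sup_left : H ≤ H ⊔ K) (le_sup_right : K ≤ H ⊔ K))
      (by rwa [← Nat.card_coe_set_eq, ← Nat.card_coe_set_eq]) (Set.toFinite _)
  rw [hHK] at key
  refine ⟨coe_mul_comm_of_coe_mul_eq hHK, H ⊔ K, hHK.symm, ?_⟩
  exact mCD_eq_mStar_of_mStar_mul_mStar_le (Nat.le_of_mul_le_mul_right key Nat.card_pos)
end

section
/- Let G be a finite p-group of order p^n with n ≥ 2 having dense CD-subgroups. Then the image of the Chermak–Delgado measure m_G on subgroups of G is exactly {p^n, p^{n+1}}. -/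
open Pointwise

lemma card_lt_of_lt' {G : Type*} [Group G] [Finite G] {H K : Subgroup G} (h : H < K) :
    Nat.card H < Nat.card K :=
  lt_of_le_of_ne (Subgroup.card_le_of_le h.le)
    (fun he => h.ne (Subgroup.eq_of_le_of_card_ge h.le he.ge))

lemma exists_strictly_between {G : Type*} [Group G] [Finite G] {p a b : ℕ} [hp : Fact p.Prime]
    {H K : Subgroup G} (hle : H ≤ K) (hH : Nat.card H = p ^ a) (hK : Nat.card K = p ^ b)
    (hab : a + 2 ≤ b) : ∃ L : Subgroup G, H < L ∧ L < K := by
  have hdvd : p ^ (a + 1) ∣ Nat.card K := hK ▸ pow_dvd_pow p (by omega)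
  have hmap : (H.subgroupOf K).map K.subtype = H := by
    rw [Subgroup.subgroupOf_map_subtype, inf_eq_left.mpr hle]
  have hc : Nat.card ((H.subgroupOf K).map K.subtype) = Nat.card (H.subgroupOf K) :=
    (Nat.card_congr (Subgroup.equivMapOfInjective _ _ K.subtype_injective).toEquiv).symm
  have hcardH' : Nat.card (H.subgroupOf K) = p ^ a := by rw [← hc, hmap, hH]
  obtain ⟨L', hL'card, hL'ge⟩ := Sylow.exists_subgroup_card_pow_prime_le p hdvd
      (H.subgroupOf K) hcardH' (Nat.le_succ a)
  have hcardL : Nat.card (L'.map K.subtype) = p ^ (a + 1) := by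
    rw [← hL'card]
    exact (Nat.card_congr
      (Subgroup.equivMapOfInjective _ _ K.subtype_injective).toEquiv).symm
  have h1 : H < L'.map K.subtype := by
    refine lt_of_le_of_ne ?_ ?_
    · rw [← hmap]; exact Subgroup.map_subtype_le_map_subtype.mpr hL'ge
    · intro he
      rw [← he, hH] at hcardL
      exact absurd hcardL (by
        have := hp.out.one_lt
        exact ne_of_lt (by exact Nat.pow_lt_pow_right this (Nat.lt_succ_self a)))
  have h2 : L'.map K.subtype < K := by
    refine lt_of_le_of_ne (Subgroup.map_subtype_le L') ?_
    intro he
    rw [he, hK] at hcardL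
    have := Nat.pow_right_injective hp.out.two_le hcardL
    omega
  exact ⟨L'.map K.subtype, h1, h2⟩

theorem stmt10 (G : Type*) [Group G] [Finite G] (p n : ℕ) (hp : p.Prime) (hn : 2 ≤ n)
    (hcard : Nat.card G = p ^ n) (hd : DenseCD G) :
    Set.range (mCD G) = {p ^ n, p ^ (n + 1)} := by
  haveI : Fact p.Prime := ⟨hp⟩
  have hp1 : 1 < p := hp.one_lt
  -- every subgroup has p-power order
  have hpow : ∀ H : Subgroup G, ∃ a, a ≤ n ∧ Nat.card H = p ^ a := by
    intro H
    obtain ⟨a, ha, hc⟩ := (Nat.dvd_prime_pow hp).mp (hcard ▸ Subgroup.card_subgroup_dvd_card H)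
    exact ⟨a, ha, hc⟩
  have hposC : ∀ H : Subgroup G, 0 < Nat.card (Subgroup.centralizer (H : Set G)) := by
    intro H; exact Nat.card_pos
  -- the range is finite, so mStar is attained and is an upper bound
  have hfin : (Set.range (mCD G)).Finite := Set.finite_range _
  have hne : (Set.range (mCD G)).Nonempty := Set.range_nonempty _
  have hub : ∀ H : Subgroup G, mCD G H ≤ mStar G := by
    intro H
    exact le_csSup hfin.bddAbove (Set.mem_range_self H)
  have hattained : ∃ X : Subgroup G, X ∈ CD G := by
    obtain ⟨H, hH⟩ := hne.csSup_mem hfin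
    exact ⟨H, hH⟩
  -- the center is contained in every CD member
  have hZle : ∀ X ∈ CD G, Subgroup.center G ≤ X := by
    intro X hX
    have hCle : Subgroup.centralizer (X : Set G) ≤
        Subgroup.centralizer ((X ⊔ Subgroup.center G : Subgroup G) : Set G) := by
      rw [Subgroup.le_centralizer_iff]
      refine sup_le ?_ ?_
      · exact Subgroup.le_centralizer_iff.mp le_rfl
      · exact Subgroup.center_le_centralizer _
    have h1 : mCD G (X ⊔ Subgroup.center G) ≥
        Nat.card (X ⊔ Subgroup.center G : Subgroup G) *
          Nat.card (Subgroup.centralizer (X : Set G)) :=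
      Nat.mul_le_mul_left _ (Subgroup.card_le_of_le hCle)
    have h2 : Nat.card (X ⊔ Subgroup.center G : Subgroup G) *
        Nat.card (Subgroup.centralizer (X : Set G)) ≤ mStar G :=
      le_trans h1 (hub _)
    rw [← hX] at h2
    have h3 : Nat.card (X ⊔ Subgroup.center G : Subgroup G) ≤ Nat.card X :=
      Nat.le_of_mul_le_mul_right h2 (hposC X)
    have h4 : X ⊔ Subgroup.center G = X :=
      (Subgroup.eq_of_le_of_card_ge le_sup_left h3).symm
    exact le_sup_right.trans h4.le
  -- the center has order at least p
  haveI : Nontrivial G := by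
    have : 1 < Nat.card G := by
      rw [hcard]; exact Nat.one_lt_pow (n := n) (by omega) hp1
    exact (Finite.one_lt_card_iff_nontrivial).mp this
  have hpg : IsPGroup p G := IsPGroup.of_card hcard
  haveI := IsPGroup.center_nontrivial hpg
  have hZcard : p ≤ Nat.card (Subgroup.center G) := by
    obtain ⟨z, _, hz⟩ := hpow (Subgroup.center G)
    have h1 : 1 < Nat.card (Subgroup.center G) := Finite.one_lt_card
    rcases Nat.eq_zero_or_pos z with rfl | hzpos
    · rw [pow_zero] at hz; omega
    · calc p = p ^ 1 := (pow_one p).symm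
        _ ≤ p ^ z := Nat.pow_le_pow_right (by omega) hzpos
        _ = _ := hz.symm
  -- minimal CD member has order p and equals the center
  obtain ⟨X₀, hX₀, hX₀min⟩ := Set.exists_min_image (CD G) (fun X => Nat.card X)
    (Set.toFinite _) hattained
  obtain ⟨a₀, ha₀n, ha₀⟩ := hpow X₀
  have hZX₀ : Subgroup.center G ≤ X₀ := hZle X₀ hX₀
  have ha₀1 : a₀ = 1 := by
    have hge : p ≤ Nat.card X₀ := le_trans hZcard (Subgroup.card_le_of_le hZX₀)
    have ha₀pos : 1 ≤ a₀ := by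
      rcases Nat.eq_zero_or_pos a₀ with h0 | h
      · rw [h0, pow_zero] at ha₀; omega
      · exact h
    by_contra h
    have h2 : 2 ≤ a₀ := by omega
    have hbotlt : (⊥ : Subgroup G) < X₀ := by
      refine bot_lt_iff_ne_bot.mpr ?_
      intro he
      rw [he, Subgroup.card_bot] at ha₀
      have := Nat.one_lt_pow (n := a₀) (by omega) hp1
      omega
    obtain ⟨L, hL1, hL2⟩ := exists_strictly_between (p := p) (bot_le : ⊥ ≤ X₀)
      (by simp [Subgroup.card_bot] : Nat.card (⊥ : Subgroup G) = p ^ 0) ha₀ (by omega)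
    obtain ⟨Y, hY, hY1, hY2⟩ := hd ⊥ X₀ hbotlt ⟨L, hL1, hL2⟩
    exact absurd (hX₀min Y hY) (not_le.mpr (card_lt_of_lt' hY2))
  -- hence X₀ = center, |center| = p, centralizer of center = ⊤
  have hX₀card : Nat.card X₀ = p := by rw [ha₀, ha₀1, pow_one]
  have hX₀eq : X₀ = Subgroup.center G := by
    refine (Subgroup.eq_of_le_of_card_ge hZX₀ ?_).symm
    rw [hX₀card]; exact hZcard
  have hZcard' : Nat.card (Subgroup.center G) = p := by rw [← hX₀eq, hX₀card]
  have hCZ : Subgroup.centralizer ((Subgroup.center G : Subgroup G) : Set G) = ⊤ := by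
    rw [eq_top_iff]
    intro g _
    rw [Subgroup.mem_centralizer_iff]
    intro h hh
    exact (Subgroup.mem_center_iff.mp hh g).symm
  -- the maximal measure is p ^ (n + 1)
  have hCtop : Subgroup.centralizer ((⊤ : Subgroup G) : Set G) = Subgroup.center G := by
    rw [Subgroup.coe_top, Subgroup.centralizer_univ]
  have hmtop : mCD G ⊤ = p ^ (n + 1) := by
    rw [mCD, hCtop, Subgroup.card_top, hcard, hZcard', pow_succ]
  have hmstar : mStar G = p ^ (n + 1) := by
    have h1 : mStar G = mCD G X₀ := hX₀.symm
    rw [h1, hX₀eq, mCD, hZcard', hCZ, Subgroup.card_top, hcard, pow_succ, mul_comm]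
  have htopCD : (⊤ : Subgroup G) ∈ CD G := by
    rw [CD, Set.mem_setOf_eq, hmtop, hmstar]
  -- lower bound : every subgroup has measure at least p ^ n
  have hlow : ∀ H : Subgroup G, p ^ n ≤ mCD G H := by
    intro H
    have hTne : ∃ X, X ∈ {X ∈ CD G | H ≤ X} := ⟨⊤, htopCD, le_top⟩
    obtain ⟨X, ⟨hXCD, hHX⟩, hXmin⟩ := Set.exists_min_image {X ∈ CD G | H ≤ X}
      (fun X => Nat.card X) (Set.toFinite _) hTne
    obtain ⟨a, han, ha⟩ := hpow H
    obtain ⟨b, hbn, hb⟩ := hpow X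
    rcases eq_or_lt_of_le hHX with rfl | hlt
    · rw [hXCD, hmstar]
      exact Nat.pow_le_pow_right (by omega) (by omega)
    · have hab : a < b := by
        have := card_lt_of_lt' hlt
        rw [ha, hb] at this
        exact (Nat.pow_lt_pow_iff_right hp1).mp this
      have hba : b ≤ a + 1 := by
        by_contra hcon
        obtain ⟨L, hL1, hL2⟩ := exists_strictly_between (p := p) hHX ha hb (by omega)
        obtain ⟨Y, hY, hY1, hY2⟩ := hd H X hlt ⟨L, hL1, hL2⟩
        exact absurd (hXmin Y ⟨hY, hY1.le⟩) (not_le.mpr (card_lt_of_lt' hY2))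
      have hbeq : b = a + 1 := by omega
      -- centralizer of X inside centralizer of H
      have hCle : Subgroup.centralizer (X : Set G) ≤ Subgroup.centralizer (H : Set G) :=
        Subgroup.centralizer_le (SetLike.coe_subset_coe.mpr hHX)
      have hCX : Nat.card (Subgroup.centralizer (X : Set G)) = p ^ (n - a) := by
        have h1 : Nat.card X * Nat.card (Subgroup.centralizer (X : Set G)) = p ^ (n + 1) := by
          rw [← hmstar]; exact hXCD
        rw [hb, hbeq] at h1
        have h2 : p ^ (n + 1) = p ^ (a + 1) * p ^ (n - a) := by
          rw [← pow_add]; congr 1; omega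
        rw [h2] at h1
        exact Nat.eq_of_mul_eq_mul_left (by positivity) h1
      calc p ^ n = p ^ a * p ^ (n - a) := by rw [← pow_add]; congr 1; omega
        _ ≤ Nat.card H * Nat.card (Subgroup.centralizer (H : Set G)) := by
            rw [ha, ← hCX]
            exact Nat.mul_le_mul_left _ (Subgroup.card_le_of_le hCle)
        _ = mCD G H := rfl
  -- conclusion
  ext m
  constructor
  · rintro ⟨H, rfl⟩
    obtain ⟨a, han, ha⟩ := hpow H
    obtain ⟨c, hcn, hc⟩ := (Nat.dvd_prime_pow hp).mp
      (hcard ▸ Subgroup.card_subgroup_dvd_card (Subgroup.centralizer (H : Set G)))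
    have hm : mCD G H = p ^ (a + c) := by rw [mCD, ha, hc, pow_add]
    have h1 : p ^ n ≤ p ^ (a + c) := hm ▸ hlow H
    have h2 : p ^ (a + c) ≤ p ^ (n + 1) := hm ▸ (hmstar ▸ hub H)
    have h3 : n ≤ a + c := (Nat.pow_le_pow_iff_right hp1).mp h1
    have h4 : a + c ≤ n + 1 := (Nat.pow_le_pow_iff_right hp1).mp h2
    rcases eq_or_lt_of_le h3 with he | hl
    · left; rw [hm, ← he]
    · right; rw [hm]; congr 1; omega
  · rintro (rfl | rfl)
    · refine ⟨⊥, ?_⟩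
      have hCbot : Subgroup.centralizer ((⊥ : Subgroup G) : Set G) = ⊤ := by
        rw [eq_top_iff]
        intro g _
        rw [Subgroup.mem_centralizer_iff]
        intro h hh
        simp only [Subgroup.coe_bot, Set.mem_singleton_iff] at hh
        subst hh; simp
      rw [mCD, hCbot, Subgroup.card_bot, Subgroup.card_top, hcard, one_mul]
    · exact ⟨⊤, hmtop⟩
end

section
/- Let G be a nonabelian group of order pq where p and q are distinct primes. Then the Chermak–Delgado lattice of G consists of exactly one subgroup, namely the unique normal Sylow subgroup of G, and G has dense CD-subgroups. -/
open Pointwise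

/-!
Say `p < q`. Sylow counting makes the Sylow `q`-subgroup `N` normal and the only subgroup of
order `q`. Since `G / Z(G)` cannot be cyclic, `Z(G) = 1`, so a subgroup `H` of prime order is
abelian but not central: `H ≤ C_G(H) < G` forces `C_G(H) = H`. Hence `m_G` takes the value `pq`
at `1` and `G`, `p²` at subgroups of order `p` and `q²` only at `N`, so `CD(G) = {N}`; a normal
subgroup of order `p` would be centralized by `N`, which is impossible. Finally a chain
`H < L < K` in a group of order `pq` forces `H = 1`, `K = G`, and `N` lies strictly between.
-/

theorem Nat.dvd_prime_mul_prime {p q d : ℕ} (hp : p.Prime) (hq : q.Prime) :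
    d ∣ p * q ↔ d = 1 ∨ d = p ∨ d = q ∨ d = p * q := by
  constructor
  · intro h
    obtain ⟨a, b, ha, hb, rfl⟩ := Nat.dvd_mul.mp h
    rcases hp.eq_one_or_self_of_dvd a ha with rfl | rfl <;>
      rcases hq.eq_one_or_self_of_dvd b hb with rfl | rfl <;> simp
  · rintro (rfl | rfl | rfl | rfl) <;> simp

namespace Subgroup

variable {G : Type*} [Group G]

theorem not_prime_index_center : ¬ (center G).index.Prime := by
  intro h
  have : Fact (center G).index.Prime := ⟨h⟩
  have : IsCyclic (G ⧸ center G) := isCyclic_of_prime_card (index_eq_card _).symm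
  have := isMulCommutative_of_isCyclic_quotient_center_self G
  simp [center_eq_top, Nat.not_prime_one] at h

theorem eq_bot_or_eq_of_le_of_card_prime {H K : Subgroup G} (hle : H ≤ K)
    (hK : (Nat.card K).Prime) : H = ⊥ ∨ H = K := by
  have : Finite K := Nat.finite_of_card_ne_zero hK.ne_zero
  rcases (Nat.dvd_prime hK).mp (card_dvd_of_le hle) with h | h
  · exact .inl (eq_bot_of_card_eq H h)
  · exact .inr (eq_of_le_of_card_ge hle h.ge)

end Subgroup

theorem Sylow.subsingleton_of_index_lt {G : Type*} [Group G] [Finite G] {p : ℕ} [Fact p.Prime]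
    (P : Sylow p G) (h : P.index < p) : Subsingleton (Sylow p G) := by
  have hle : Nat.card (Sylow p G) ≤ P.index :=
    Nat.le_of_dvd P.index_ne_zero_of_finite.bot_lt P.card_dvd_index
  have hone : Nat.card (Sylow p G) = 1 :=
    (card_sylow_modEq_one p G).eq_of_lt_of_lt (hle.trans_lt h) (Fact.out : p.Prime).one_lt
  exact (Nat.card_eq_one_iff_unique.mp hone).1

theorem mCD_bot (G : Type*) [Group G] : mCD G ⊥ = Nat.card G := by
  have : Subgroup.centralizer ((⊥ : Subgroup G) : Set G) = ⊤ := by simp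
  rw [mCD, this, Subgroup.card_bot, Subgroup.card_top, one_mul]

theorem mCD_top (G : Type*) [Group G] : mCD G ⊤ = Nat.card G * Nat.card (Subgroup.center G) := by
  simp [mCD, Subgroup.centralizer_univ]

section OrderPQ

open Subgroup

variable {G : Type*} [Group G] [Finite G] {p q : ℕ}

theorem card_eq_or_card_eq_of_ne_bot_of_ne_top (hp : p.Prime) (hq : q.Prime)
    (hcard : Nat.card G = p * q) {H : Subgroup G} (hbot : H ≠ ⊥) (htop : H ≠ ⊤) :
    Nat.card H = p ∨ Nat.card H = q := by
  rcases (Nat.dvd_prime_mul_prime hp hq).mp (hcard ▸ card_subgroup_dvd_card H) with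
    h | h | h | h
  · exact absurd (eq_bot_of_card_eq H h) hbot
  · exact .inl h
  · exact .inr h
  · exact absurd (card_eq_iff_eq_top H |>.mp (h.trans hcard.symm)) htop

theorem card_prime_of_ne_bot_of_ne_top (hp : p.Prime) (hq : q.Prime)
    (hcard : Nat.card G = p * q) {H : Subgroup G} (hbot : H ≠ ⊥) (htop : H ≠ ⊤) :
    (Nat.card H).Prime := by
  rcases card_eq_or_card_eq_of_ne_bot_of_ne_top hp hq hcard hbot htop with h | h <;>
    rwa [h]

theorem center_eq_bot_of_card_eq_mul (hp : p.Prime) (hq : q.Prime)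
    (hcard : Nat.card G = p * q) (hna : ¬ ∀ a b : G, a * b = b * a) : center G = ⊥ := by
  by_contra hbot
  have htop : center G ≠ ⊤ := fun h ↦ hna fun a b ↦ mem_center_iff.mp (h ▸ mem_top b) a
  have hmul : Nat.card (center G) * (center G).index = p * q := hcard ▸ card_mul_index _
  rcases card_eq_or_card_eq_of_ne_bot_of_ne_top hp hq hcard hbot htop with h | h
  · rw [h] at hmul
    exact not_prime_index_center (Nat.eq_of_mul_eq_mul_left hp.pos hmul ▸ hq)
  · rw [h, mul_comm p] at hmul
    exact not_prime_index_center (Nat.eq_of_mul_eq_mul_left hq.pos hmul ▸ hp)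

theorem centralizer_eq_self_of_card_prime (hp : p.Prime) (hq : q.Prime)
    (hcard : Nat.card G = p * q) (hZ : center G = ⊥) {H : Subgroup G}
    (hH : (Nat.card H).Prime) : centralizer (H : Set G) = H := by
  have : Fact (Nat.card H).Prime := ⟨hH⟩
  have : IsCyclic H := isCyclic_of_prime_card rfl
  have hle : H ≤ centralizer (H : Set G) := le_centralizer H
  have hHbot : H ≠ ⊥ := fun h ↦ Nat.not_prime_one (card_eq_one.mpr h ▸ hH)
  have htop : centralizer (H : Set G) ≠ ⊤ := fun h ↦
    hHbot (le_bot_iff.mp (hZ ▸ centralizer_eq_top_iff_subset.mp h))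
  have hbot : centralizer (H : Set G) ≠ ⊥ := fun h ↦ hHbot (le_bot_iff.mp (h ▸ hle))
  exact ((eq_bot_or_eq_of_le_of_card_prime hle
    (card_prime_of_ne_bot_of_ne_top hp hq hcard hbot htop)).resolve_left hHbot).symm

theorem exists_normal_card_eq_of_lt (hp : p.Prime) (hq : q.Prime) (hlt : p < q)
    (hcard : Nat.card G = p * q) :
    ∃ N : Subgroup G, N.Normal ∧ Nat.card N = q ∧
      ∀ H : Subgroup G, Nat.card H = q → H = N := by
  have : Fact q.Prime := ⟨hq⟩
  let P : Sylow q G := default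
  have hP : Nat.card P = q := by
    rw [P.card_eq_multiplicity, hcard, Nat.factorization_mul hp.ne_zero hq.ne_zero]
    simp [hp.factorization, hq.factorization, hlt.ne]
  have hidx : P.index = p := by
    have h := card_mul_index (P : Subgroup G)
    rw [hcard, hP, mul_comm p] at h
    exact Nat.eq_of_mul_eq_mul_left hq.pos h
  have := P.subsingleton_of_index_lt (hidx ▸ hlt)
  refine ⟨P, P.normal_of_subsingleton, hP, fun H hH ↦ ?_⟩
  obtain ⟨Q, hQ⟩ := (IsPGroup.of_card (n := 1) (by rw [hH, pow_one])).exists_le_sylow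
  exact eq_of_le_of_card_ge (Subsingleton.elim Q P ▸ hQ) (by rw [hH, hP])

theorem mCD_of_card_prime (hp : p.Prime) (hq : q.Prime) (hcard : Nat.card G = p * q)
    (hZ : center G = ⊥) {H : Subgroup G} (hH : (Nat.card H).Prime) :
    mCD G H = Nat.card H * Nat.card H := by
  rw [mCD, centralizer_eq_self_of_card_prime hp hq hcard hZ hH]

theorem mCD_lt_of_card_ne (hp : p.Prime) (hq : q.Prime) (hlt : p < q)
    (hcard : Nat.card G = p * q) (hZ : center G = ⊥) {H : Subgroup G} (hH : Nat.card H ≠ q) :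
    mCD G H < q * q := by
  have hpq : p * q < q * q := Nat.mul_lt_mul_of_pos_right hlt hq.pos
  by_cases hbot : H = ⊥
  · simpa [hbot, mCD_bot, hcard] using hpq
  by_cases htop : H = ⊤
  · simpa [htop, mCD_top, hZ, hcard] using hpq
  have hHp : Nat.card H = p :=
    (card_eq_or_card_eq_of_ne_bot_of_ne_top hp hq hcard hbot htop).resolve_right hH
  rw [mCD_of_card_prime hp hq hcard hZ (hHp ▸ hp), hHp]
  exact Nat.mul_self_lt_mul_self hlt

theorem CD_eq_singleton (hp : p.Prime) (hq : q.Prime) (hlt : p < q)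
    (hcard : Nat.card G = p * q) (hZ : center G = ⊥) {N : Subgroup G} (hN : Nat.card N = q)
    (huniq : ∀ H : Subgroup G, Nat.card H = q → H = N) : CD G = {N} := by
  have hmN : mCD G N = q * q := hN ▸ mCD_of_card_prime hp hq hcard hZ (hN ▸ hq)
  have hmax : IsGreatest (Set.range (mCD G)) (q * q) := by
    refine ⟨⟨N, hmN⟩, ?_⟩
    rintro _ ⟨H, rfl⟩
    by_cases hH : Nat.card H = q
    · exact (huniq H hH ▸ hmN).le
    · exact (mCD_lt_of_card_ne hp hq hlt hcard hZ hH).le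
  ext H
  simp only [CD, mStar, hmax.csSup_eq, Set.mem_ofPred_eq, Set.mem_singleton_iff]
  constructor
  · intro h
    exact huniq H (not_not.mp fun hH ↦ (mCD_lt_of_card_ne hp hq hlt hcard hZ hH).ne h)
  · rintro rfl
    exact hmN

theorem not_normal_of_card_eq (hp : p.Prime) (hq : q.Prime) (hpq : p ≠ q)
    (hcard : Nat.card G = p * q) (hZ : center G = ⊥) {M N : Subgroup G} (hN : N.Normal)
    (hNq : Nat.card N = q) (hMp : Nat.card M = p) : ¬ M.Normal := by
  intro hM
  have hdisj : Disjoint M N := by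
    rw [disjoint_iff, ← card_eq_one]
    have hdvdp : Nat.card (M ⊓ N : Subgroup G) ∣ p := hMp ▸ card_dvd_of_le inf_le_left
    have hdvdq : Nat.card (M ⊓ N : Subgroup G) ∣ q := hNq ▸ card_dvd_of_le inf_le_right
    exact Nat.eq_one_of_dvd_coprimes ((Nat.coprime_primes hp hq).mpr hpq) hdvdp hdvdq
  have hNM : N ≤ centralizer (M : Set G) := fun n hn ↦ mem_centralizer_iff.mpr fun m hm ↦
    (commute_of_normal_of_disjoint M N hM hN hdisj m n hm hn).eq
  rw [centralizer_eq_self_of_card_prime hp hq hcard hZ (hMp ▸ hp)] at hNM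
  have hqp := card_dvd_of_le hNM
  rw [hNq, hMp] at hqp
  exact hpq ((Nat.prime_dvd_prime_iff_eq hq hp).mp hqp).symm

theorem eq_bot_and_eq_top_of_lt_of_lt (hp : p.Prime) (hq : q.Prime)
    (hcard : Nat.card G = p * q) {H L K : Subgroup G} (hHL : H < L) (hLK : L < K) :
    H = ⊥ ∧ K = ⊤ := by
  have hLbot : L ≠ ⊥ := (bot_le.trans_lt hHL).ne'
  have hL := card_prime_of_ne_bot_of_ne_top hp hq hcard hLbot (hLK.trans_le le_top).ne
  refine ⟨(eq_bot_or_eq_of_le_of_card_prime hHL.le hL).resolve_right hHL.ne, ?_⟩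
  by_contra hK
  have hK' := card_prime_of_ne_bot_of_ne_top hp hq hcard (bot_le.trans_lt (hHL.trans hLK)).ne' hK
  rcases eq_bot_or_eq_of_le_of_card_prime hLK.le hK' with h | h
  · exact hLbot h
  · exact hLK.ne h

theorem denseCD_of_mem_CD (hp : p.Prime) (hq : q.Prime) (hcard : Nat.card G = p * q)
    {N : Subgroup G} (hN : N ∈ CD G) (hbot : ⊥ < N) (htop : N < ⊤) : DenseCD G := by
  rintro H K - ⟨L, hHL, hLK⟩
  obtain ⟨rfl, rfl⟩ := eq_bot_and_eq_top_of_lt_of_lt hp hq hcard hHL hLK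
  exact ⟨N, hN, hbot, htop⟩

end OrderPQ

theorem stmt12 (G : Type*) [Group G] [Finite G] (p q : ℕ) (hp : p.Prime) (hq : q.Prime)
    (hpq : p ≠ q) (hcard : Nat.card G = p * q) (hna : ¬ ∀ a b : G, a * b = b * a) :
    (∃ N : Subgroup G, N.Normal ∧ (Nat.card N = p ∨ Nat.card N = q) ∧ CD G = {N} ∧
      ∀ M : Subgroup G, M.Normal → (Nat.card M = p ∨ Nat.card M = q) → M = N) ∧
    DenseCD G := by
  wlog hlt : p < q generalizing p q
  · have hqp : q < p := hpq.lt_or_gt.resolve_left hlt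
    simpa only [or_comm] using this q p hq hp hpq.symm (by rw [hcard, mul_comm]) hqp
  have hZ := center_eq_bot_of_card_eq_mul hp hq hcard hna
  obtain ⟨N, hN, hNq, huniq⟩ := exists_normal_card_eq_of_lt hp hq hlt hcard
  have hCD := CD_eq_singleton hp hq hlt hcard hZ hNq huniq
  have hbot : ⊥ < N :=
    bot_lt_iff_ne_bot.mpr fun h ↦ hq.ne_one (hNq ▸ Subgroup.card_eq_one.mpr h)
  have htop : N < ⊤ := lt_top_iff_ne_top.mpr fun h ↦ by
    rw [h, Subgroup.card_top, hcard] at hNq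
    exact hp.ne_one (Nat.eq_of_mul_eq_mul_right hq.pos (hNq.trans (one_mul q).symm))
  refine ⟨⟨N, hN, .inr hNq, hCD, ?_⟩, denseCD_of_mem_CD hp hq hcard (hCD ▸ rfl) hbot htop⟩
  rintro M hM (hMp | hMq)
  · exact absurd hM (not_normal_of_card_eq hp hq hpq hcard hZ hN hNq hMp)
  · exact huniq M hMq
end

section
/- The extraspecial group of order p^3 and exponent p, for an odd prime p, has dense CD-subgroups. -/
open Pointwise

/-!
The centre `Z` of a nonabelian group `G` of order `p ^ 3` has order `p`, and every subgroup `M`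
of order `p ^ 2` is abelian and not central, hence self-centralizing. So
`|H| * |C_G(H)| ≤ p ^ 4` for every `H`, with equality for `Z`, for `G` and for every `M`.
If `H < L < K`, then either `H = 1`, in which case `|K| ≥ p ^ 2` forces `Z < K`, or `L` has
order `p ^ 2`; in both cases a CD-subgroup lies strictly between `H` and `K`.
-/

open Subgroup

theorem mStar_eq_of_forall_mCD_le {G : Type*} [Group G] {N : ℕ} (hle : ∀ H, mCD G H ≤ N)
    {H₀ : Subgroup G} (h₀ : mCD G H₀ = N) : mStar G = N :=
  le_antisymm (csSup_le (Set.range_nonempty _) (Set.forall_mem_range.2 hle))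
    (h₀ ▸ le_csSup ⟨N, Set.forall_mem_range.2 hle⟩ ⟨H₀, rfl⟩)

section PrimePowerOrder

variable {G : Type*} [Group G] {p n : ℕ}

theorem exists_card_subgroup_eq_pow (hp : p.Prime) (hG : Nat.card G = p ^ n) (H : Subgroup G) :
    ∃ i ≤ n, Nat.card H = p ^ i :=
  (Nat.dvd_prime_pow hp).1 (hG ▸ H.card_subgroup_dvd_card)

theorem lt_of_subgroup_lt_of_card_eq_pow [Finite G] (hp : p.Prime) {H K : Subgroup G}
    (hHK : H < K) {i j : ℕ} (hH : Nat.card H = p ^ i) (hK : Nat.card K = p ^ j) : i < j := by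
  have hcard : Nat.card H < Nat.card K :=
    (card_le_of_le hHK.le).lt_of_ne fun h ↦ hHK.ne (eq_of_le_of_card_ge hHK.le h.ge)
  rwa [hH, hK, Nat.pow_lt_pow_iff_right hp.one_lt] at hcard

end PrimePowerOrder

section OrderPrimeCube

variable {G : Type*} [Group G] [Finite G] {p : ℕ} [hp : Fact p.Prime]

theorem card_center_eq_prime (hG : Nat.card G = p ^ 3) (hnc : ¬ IsMulCommutative G) :
    Nat.card (center G) = p := by
  obtain ⟨k, hk0, hk⟩ := IsPGroup.card_center_eq_prime_pow hG (by norm_num)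
  have hk3 : k ≤ 3 := by
    rw [← Nat.pow_le_pow_iff_right hp.out.one_lt, ← hk, ← hG]
    exact card_le_card_group _
  interval_cases k
  · rw [hk, pow_one]
  · have hindex : Nat.card (G ⧸ center G) = p := by
      have := (center G).card_mul_index
      rw [hk, hG, index_eq_card, pow_succ' p 2, mul_comm] at this
      exact Nat.eq_of_mul_eq_mul_right (pow_pos hp.out.pos 2) this
    have : IsCyclic (G ⧸ center G) := isCyclic_of_prime_card hindex
    exact absurd (isMulCommutative_of_isCyclic_quotient_center_self G) hnc
  · exact absurd (center_eq_top_iff.1 (eq_top_of_card_eq _ (hk.trans hG.symm))) hnc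

theorem centralizer_eq_self_of_card_eq_sq (hG : Nat.card G = p ^ 3)
    (hnc : ¬ IsMulCommutative G) {M : Subgroup G} (hM : Nat.card M = p ^ 2) :
    centralizer (M : Set G) = M := by
  have : IsMulCommutative M := IsPGroup.isMulCommutative_of_card_eq_prime_sq hM
  have hC_lt_top : centralizer (M : Set G) < ⊤ := by
    refine lt_top_iff_ne_top.2 fun htop ↦ ?_
    have hMZ := card_le_of_le (centralizer_eq_top_iff_subset.1 htop : M ≤ center G)
    rw [hM, card_center_eq_prime hG hnc] at hMZ
    exact hMZ.not_gt (lt_self_pow₀ hp.out.one_lt one_lt_two)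
  refine (eq_of_le_of_not_lt M.le_centralizer fun hM_lt ↦ ?_).symm
  obtain ⟨j, -, hj⟩ := exists_card_subgroup_eq_pow hp.out hG (centralizer (M : Set G))
  have := lt_of_subgroup_lt_of_card_eq_pow hp.out hM_lt hM hj
  have := lt_of_subgroup_lt_of_card_eq_pow hp.out hC_lt_top hj (card_top.trans hG)
  omega

theorem mCD_center (hG : Nat.card G = p ^ 3) (hnc : ¬ IsMulCommutative G) :
    mCD G (center G) = p ^ 4 := by
  rw [mCD, centralizer_eq_top_iff_subset.2 subset_rfl, card_top, hG, card_center_eq_prime hG hnc]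
  ring

theorem mCD_of_card_eq_sq (hG : Nat.card G = p ^ 3) (hnc : ¬ IsMulCommutative G)
    {M : Subgroup G} (hM : Nat.card M = p ^ 2) : mCD G M = p ^ 4 := by
  rw [mCD, centralizer_eq_self_of_card_eq_sq hG hnc hM, hM]
  ring

theorem mCD_le (hG : Nat.card G = p ^ 3) (hnc : ¬ IsMulCommutative G) (H : Subgroup G) :
    mCD G H ≤ p ^ 4 := by
  obtain ⟨i, hi, hH⟩ := exists_card_subgroup_eq_pow hp.out hG H
  have hC : Nat.card (centralizer (H : Set G)) ≤ p ^ 3 := hG ▸ card_le_card_group _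
  obtain hi1 | rfl | rfl : i ≤ 1 ∨ i = 2 ∨ i = 3 := by omega
  · calc mCD G H ≤ p ^ 1 * p ^ 3 := Nat.mul_le_mul (hH ▸ Nat.pow_le_pow_right hp.out.pos hi1) hC
      _ = p ^ 4 := by ring
  · exact (mCD_of_card_eq_sq hG hnc hH).le
  · rw [eq_top_of_card_eq H (hH.trans hG.symm), mCD, coe_top, centralizer_univ, card_top, hG,
      card_center_eq_prime hG hnc, ← pow_succ]

theorem mem_CD_iff (hG : Nat.card G = p ^ 3) (hnc : ¬ IsMulCommutative G) {H : Subgroup G} :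
    H ∈ CD G ↔ mCD G H = p ^ 4 := by
  rw [CD, Set.mem_ofPred_eq, mStar_eq_of_forall_mCD_le (mCD_le hG hnc) (mCD_center hG hnc)]

theorem card_eq_sq_of_bot_lt_of_lt_of_lt (hG : Nat.card G = p ^ 3) {H L K : Subgroup G}
    (hH : ⊥ < H) (hHL : H < L) (hLK : L < K) : Nat.card L = p ^ 2 := by
  obtain ⟨a, -, ha⟩ := exists_card_subgroup_eq_pow hp.out hG H
  obtain ⟨b, -, hb⟩ := exists_card_subgroup_eq_pow hp.out hG L
  obtain ⟨c, hc, hc'⟩ := exists_card_subgroup_eq_pow hp.out hG K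
  have := lt_of_subgroup_lt_of_card_eq_pow hp.out hH (card_bot.trans (pow_zero p).symm) ha
  have := lt_of_subgroup_lt_of_card_eq_pow hp.out hHL ha hb
  have := lt_of_subgroup_lt_of_card_eq_pow hp.out hLK hb hc'
  rw [hb, show b = 2 by omega]

theorem center_lt_of_bot_lt_of_lt (hG : Nat.card G = p ^ 3) (hnc : ¬ IsMulCommutative G)
    {L K : Subgroup G} (hL : ⊥ < L) (hLK : L < K) : center G < K := by
  obtain ⟨b, -, hb⟩ := exists_card_subgroup_eq_pow hp.out hG L
  obtain ⟨c, hc, hK⟩ := exists_card_subgroup_eq_pow hp.out hG K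
  have := lt_of_subgroup_lt_of_card_eq_pow hp.out hL (card_bot.trans (pow_zero p).symm) hb
  have := lt_of_subgroup_lt_of_card_eq_pow hp.out hLK hb hK
  have hZK : center G ≤ K := by
    obtain hc2 | hc3 : c = 2 ∨ c = 3 := by omega
    · rw [← centralizer_eq_self_of_card_eq_sq hG hnc (hc2 ▸ hK : Nat.card K = p ^ 2)]
      exact center_le_centralizer _
    · rw [eq_top_of_card_eq K (hK.trans (hc3 ▸ hG.symm))]
      exact le_top
  refine hZK.lt_of_ne fun hZ ↦ ?_
  have := card_center_eq_prime hG hnc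
  rw [hZ, hK] at this
  have := Nat.pow_right_injective hp.out.two_le (this.trans (pow_one p).symm)
  omega

end OrderPrimeCube

theorem stmt17_general (G : Type*) [Group G] [Finite G] (p : ℕ) (hp : p.Prime)
    (hcard : Nat.card G = p ^ 3) (hna : ¬ ∀ a b : G, a * b = b * a) :
    DenseCD G := by
  have : Fact p.Prime := ⟨hp⟩
  have hnc : ¬ IsMulCommutative G := fun h ↦ hna h.is_comm.comm
  rintro H K - ⟨L, hHL, hLK⟩
  rcases eq_or_ne H ⊥ with rfl | hH
  · have hZ : ⊥ < center G := bot_lt_iff_ne_bot.2 <|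
      (center G).one_lt_card_iff_ne_bot.1 (card_center_eq_prime hcard hnc ▸ hp.one_lt)
    exact ⟨center G, (mem_CD_iff hcard hnc).2 (mCD_center hcard hnc), hZ,
      center_lt_of_bot_lt_of_lt hcard hnc hHL hLK⟩
  · have hL := card_eq_sq_of_bot_lt_of_lt_of_lt hcard (bot_lt_iff_ne_bot.2 hH) hHL hLK
    exact ⟨L, (mem_CD_iff hcard hnc).2 (mCD_of_card_eq_sq hcard hnc hL), hHL, hLK⟩

theorem stmt17 (G : Type*) [Group G] [Finite G] (p : ℕ) (hp : p.Prime) (hodd : Odd p)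
    (hcard : Nat.card G = p ^ 3) (hna : ¬ ∀ a b : G, a * b = b * a)
    (hexp : Monoid.exponent G = p) :
    DenseCD G :=
  stmt17_general G p hp hcard hna
end
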